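/- arXiv:2407.17323 — 4 statements merged into one kernel-verified Lean document; each statement's English description precedes it below -/
import Mathlib

section
/- Let (A, ·_{α,β}, p_ω, q_ω) be a BiHom-Ω-associative algebra, M a vector space with commuting families of linear maps p^M_ω, q^M_ω : M → M, and families of bilinear maps ▷_{α,β} : A ⊗ M → M and ◁_{α,β} : M ⊗ A → M. Define on A ⊕ M the operations (x,m) ∘_{α,β} (x',m') = (x ·_{α,β} x', x ▷_{α,β} m' + m ◁_{α,β} x'), p_α(x,m) = (p_α(x), p^M_α(m)), q_α(x,m) = (q_α(x), q^M_α(m)). Then (A ⊕ M, ∘_{α,β}, p_ω, q_ω) is a BiHom-Ω-associative algebra if and only if (M, ▷_{α,β}, ◁_{α,β}, p^M_ω, q^M_ω) is a bimodule over A. -/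
/-- A BiHom-`Ω`-associative algebra structure: two commuting families of linear maps
`p, q` and a family of bilinear maps `mul` satisfying multiplicativity and
BiHom-`Ω`-associativity. -/
def IsBiHomAssoc {k Ω A : Type*} [CommRing k] [Semigroup Ω]
    [AddCommGroup A] [Module k A]
    (mul : Ω → Ω → A →ₗ[k] A →ₗ[k] A) (p q : Ω → A →ₗ[k] A) : Prop :=
  (∀ α β x, p α (q β x) = q β (p α x)) ∧
  (∀ α β x y, p (α * β) (mul α β x y) = mul α β (p α x) (p β y)) ∧
  (∀ α β x y, q (α * β) (mul α β x y) = mul α β (q α x) (q β y)) ∧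
  (∀ α β γ x y z,
    mul α (β * γ) (p α x) (mul β γ y z) = mul (α * β) γ (mul α β x y) (q γ z))

/-- A bimodule over a BiHom-`Ω`-associative algebra. -/
def IsBiHomBimodule {k Ω A M : Type*} [CommRing k] [Semigroup Ω]
    [AddCommGroup A] [Module k A] [AddCommGroup M] [Module k M]
    (mul : Ω → Ω → A →ₗ[k] A →ₗ[k] A) (p q : Ω → A →ₗ[k] A)
    (l : Ω → Ω → A →ₗ[k] M →ₗ[k] M) (r : Ω → Ω → M →ₗ[k] A →ₗ[k] M)
    (pM qM : Ω → M →ₗ[k] M) : Prop :=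
  (∀ α β x m, pM (α * β) (l α β x m) = l α β (p α x) (pM β m)) ∧
  (∀ α β x m, qM (α * β) (l α β x m) = l α β (q α x) (qM β m)) ∧
  (∀ α β γ x x' m,
    l α (β * γ) (p α x) (l β γ x' m) = l (α * β) γ (mul α β x x') (qM γ m)) ∧
  (∀ α β m x, pM (α * β) (r α β m x) = r α β (pM α m) (p β x)) ∧
  (∀ α β m x, qM (α * β) (r α β m x) = r α β (qM α m) (q β x)) ∧
  (∀ α β γ m x x',
    r α (β * γ) (pM α m) (mul β γ x x') = r (α * β) γ (r α β m x) (q γ x')) ∧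
  (∀ α β γ x m x',
    l α (β * γ) (p α x) (r β γ m x') = r (α * β) γ (l α β x m) (q γ x'))

/-- The semi-direct product multiplication on `A ⊕ M`:
`(x,m) ∘ (x',m') = (x·x', x ▷ m' + m ◁ x')`. -/
def semidirectMul {k Ω A M : Type*} [CommRing k] [Semigroup Ω]
    [AddCommGroup A] [Module k A] [AddCommGroup M] [Module k M]
    (mul : Ω → Ω → A →ₗ[k] A →ₗ[k] A)
    (l : Ω → Ω → A →ₗ[k] M →ₗ[k] M) (r : Ω → Ω → M →ₗ[k] A →ₗ[k] M)
    (α β : Ω) : (A × M) →ₗ[k] (A × M) →ₗ[k] (A × M) :=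
  LinearMap.mk₂ k
    (fun u v => (mul α β u.1 v.1, l α β u.1 v.2 + r α β u.2 v.1))
    (fun u u' v => by simp [Prod.ext_iff]; abel)
    (fun c u v => by simp [Prod.ext_iff, smul_add])
    (fun u v v' => by simp [Prod.ext_iff]; abel)
    (fun c u v => by simp [Prod.ext_iff, smul_add])

lemma semidirectMul_apply {k Ω A M : Type*} [CommRing k] [Semigroup Ω]
    [AddCommGroup A] [Module k A] [AddCommGroup M] [Module k M]
    (mul : Ω → Ω → A →ₗ[k] A →ₗ[k] A)
    (l : Ω → Ω → A →ₗ[k] M →ₗ[k] M) (r : Ω → Ω → M →ₗ[k] A →ₗ[k] M)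
    (α β : Ω) (u v : A × M) :
    semidirectMul mul l r α β u v
      = (mul α β u.1 v.1, l α β u.1 v.2 + r α β u.2 v.1) := rfl

/-- Given a BiHom-`Ω`-associative algebra `A` and a vector space `M`
with commuting families of linear maps `pM, qM` and families of bilinear maps
`l : A ⊗ M → M`, `r : M ⊗ A → M`, the semi-direct product `A ⊕ M` (with componentwise
structure maps) is a BiHom-`Ω`-associative algebra if and only if
`(M, l, r, pM, qM)` is a bimodule over `A`. -/
theorem semidirect_isBiHomAssoc_iff_isBimodule
    {k Ω A M : Type*} [CommRing k] [Semigroup Ω]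
    [AddCommGroup A] [Module k A] [AddCommGroup M] [Module k M]
    (mul : Ω → Ω → A →ₗ[k] A →ₗ[k] A) (p q : Ω → A →ₗ[k] A)
    (l : Ω → Ω → A →ₗ[k] M →ₗ[k] M) (r : Ω → Ω → M →ₗ[k] A →ₗ[k] M)
    (pM qM : Ω → M →ₗ[k] M)
    (hA : IsBiHomAssoc mul p q)
    (hcomm : ∀ α β m, pM α (qM β m) = qM β (pM α m)) :
    IsBiHomAssoc (semidirectMul mul l r)
        (fun ω => (p ω).prodMap (pM ω)) (fun ω => (q ω).prodMap (qM ω))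
      ↔ IsBiHomBimodule mul p q l r pM qM := by
  obtain ⟨hAc, hAp, hAq, hAa⟩ := hA
  constructor
  · rintro ⟨hc, hp, hq, ha⟩
    refine ⟨?_, ?_, ?_, ?_, ?_, ?_, ?_⟩
    · intro α β x m
      have := congrArg Prod.snd (hp α β ((x : A), (0 : M)) ((0 : A), m))
      simpa [semidirectMul_apply] using this
    · intro α β x m
      have := congrArg Prod.snd (hq α β ((x : A), (0 : M)) ((0 : A), m))
      simpa [semidirectMul_apply] using this
    · intro α β γ x x' m
      have := congrArg Prod.snd (ha α β γ ((x : A), (0 : M)) (x', 0) (0, m))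
      simpa [semidirectMul_apply] using this
    · intro α β m x
      have := congrArg Prod.snd (hp α β ((0 : A), m) (x, (0 : M)))
      simpa [semidirectMul_apply] using this
    · intro α β m x
      have := congrArg Prod.snd (hq α β ((0 : A), m) (x, (0 : M)))
      simpa [semidirectMul_apply] using this
    · intro α β γ m x x'
      have := congrArg Prod.snd (ha α β γ ((0 : A), m) (x, 0) (x', 0))
      simpa [semidirectMul_apply] using this
    · intro α β γ x m x'
      have := congrArg Prod.snd (ha α β γ ((x : A), (0 : M)) (0, m) (x', 0))
      simpa [semidirectMul_apply] using this
  · rintro ⟨h1, h2, h3, h4, h5, h6, h7⟩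
    refine ⟨?_, ?_, ?_, ?_⟩
    · intro α β u
      simp [Prod.ext_iff, hAc, hcomm]
    · intro α β u v
      simp [semidirectMul_apply, Prod.ext_iff, hAp, h1, h4]
    · intro α β u v
      simp [semidirectMul_apply, Prod.ext_iff, hAq, h2, h5]
    · intro α β γ u v w
      simp only [semidirectMul_apply, LinearMap.prodMap_apply, Prod.ext_iff,
        map_add]
      exact ⟨hAa α β γ u.1 v.1 w.1, by
        rw [h3, h6, h7]; simp [LinearMap.add_apply]; abel⟩
end

section
/- Let A be a vector space with a family of bilinear maps ·_{α,β} : A ⊗ A → A and a family of linear maps R_ω : A → A such that (A, ·_{α,β}, R_ω) is a Rota-Baxter family Ω-associative algebra of weight λ. Let (p_ω)_{ω∈Ω} and (q_ω)_{ω∈Ω} be two commuting families of invertible linear maps on A, each commuting with all R_ω, and which satisfy multiplicativity with respect to ·. Define x ∗_{α,β} y := p_α(x) ·_{α,β} q_β(y). Then (A, ∗_{α,β}, R_ω, p_ω, q_ω) is a Rota-Baxter family BiHom-Ω-associative algebra of weight λ, i.e., the Rota-Baxter family identity R_α(x) ∗_{α,β} R_β(y) = R_{αβ}(R_α(x) ∗_{α,β}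 y) + R_{αβ}(x ∗_{α,β} R_β(y)) + λ R_{αβ}(x ∗_{α,β} y) holds. -/
/-- **Yau twisting.** Let `(A, mul, R)` be a Rota-Baxter family
`Ω`-associative algebra of weight `λ`, and let `p, q` be two commuting families of
invertible linear maps on `A`, commuting with the family `R` and multiplicative with
respect to `mul`.  Then for `x ∗_{α,β} y := mul α β (p α x) (q β y)` the Rota-Baxter
family identity of weight `λ` holds for `∗`. -/
theorem yauTwist_rotaBaxterFamily
    {k Ω A : Type*} [CommRing k] [Semigroup Ω] [AddCommGroup A] [Module k A]
    (lam : k)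
    (mul : Ω → Ω → A →ₗ[k] A →ₗ[k] A) (R p q : Ω → A →ₗ[k] A)
    -- `Ω`-associativity of `mul`
    (hassoc : ∀ α β γ x y z,
      mul α (β * γ) x (mul β γ y z) = mul (α * β) γ (mul α β x y) z)
    -- Rota-Baxter family identity of weight `λ` for `mul`
    (hRB : ∀ α β x y,
      mul α β (R α x) (R β y)
        = R (α * β) (mul α β (R α x) y) + R (α * β) (mul α β x (R β y))
          + lam • R (α * β) (mul α β x y))
    -- `p`, `q` are invertible
    (hpinv : ∀ ω, Function.Bijective (p ω)) (hqinv : ∀ ω, Function.Bijective (q ω))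
    -- the families `p` and `q` commute, and commute with `R`
    (hpq : ∀ α β x, p α (q β x) = q β (p α x))
    (hpR : ∀ α β x, p α (R β x) = R β (p α x))
    (hqR : ∀ α β x, q α (R β x) = R β (q α x))
    -- multiplicativity of `p` and `q` with respect to `mul`
    (hpmul : ∀ α β x y, p (α * β) (mul α β x y) = mul α β (p α x) (p β y))
    (hqmul : ∀ α β x y, q (α * β) (mul α β x y) = mul α β (q α x) (q β y)) :
    ∀ α β x y,
      mul α β (p α (R α x)) (q β (R β y))
        = R (α * β) (mul α β (p α (R α x)) (q β y))
          + R (α * β) (mul α β (p α x) (q β (R β y)))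
          + lam • R (α * β) (mul α β (p α x) (q β y)) := by
  intro α β x y
  rw [hpR, hqR, hRB, ← hpR, ← hqR]
end

section
/- Let (A, ·_{α,β}, R_ω, p_ω, q_ω) be a Rota-Baxter family BiHom-Ω-associative algebra of weight λ and let (M, ▷_{α,β}, ◁_{α,β}, p^M_ω, q^M_ω) be a bimodule over the underlying BiHom-Ω-associative algebra A, equipped with linear maps T_ω : M → M commuting with p^M_ω and q^M_ω. Define T^⊕_α(a,m) := (R_α(a), T_α(m)) on the semi-direct product A ⋉ M. Then (A ⋉ M, ∘_{α,β}, T^⊕_ω, p_ω ⊕ p^M_ω, q_ω ⊕ q^M_ω) is a Rota-Baxter family BiHom-Ω-associative algebra of weight λ if and only if (M, ▷, ◁, T_ω, p^M_ω, q^M_ω) is a Rota-Baxter family BiHom-Ω-bimodule over A. -/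
/-- A Rota-Baxter family BiHom-`Ω`-associative algebra of weight `λ`. -/
def IsRBFBiHomAssoc {k Ω A : Type*} [CommRing k] [Semigroup Ω]
    [AddCommGroup A] [Module k A] (lam : k)
    (mul : Ω → Ω → A →ₗ[k] A →ₗ[k] A) (R p q : Ω → A →ₗ[k] A) : Prop :=
  IsBiHomAssoc mul p q ∧
  (∀ ω x, p ω (R ω x) = R ω (p ω x)) ∧
  (∀ ω x, q ω (R ω x) = R ω (q ω x)) ∧
  (∀ α β x y,
    mul α β (R α x) (R β y)
      = R (α * β) (mul α β (R α x) y) + R (α * β) (mul α β x (R β y))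
        + lam • R (α * β) (mul α β x y))

/-- With `T⊕_ω := R_ω ⊕ T_ω` on the semi-direct product `A ⋉ M`,
the tuple `(A ⋉ M, ∘, T⊕, p ⊕ pM, q ⊕ qM)` is a Rota-Baxter family
BiHom-`Ω`-associative algebra of weight `λ` if and only if
`(M, l, r, T, pM, qM)` is a Rota-Baxter family BiHom-`Ω`-bimodule over `A`. -/
theorem semidirect_isRBF_iff_isRBFBimodule
    {k Ω A M : Type*} [CommRing k] [Semigroup Ω]
    [AddCommGroup A] [Module k A] [AddCommGroup M] [Module k M]
    (lam : k)
    (mul : Ω → Ω → A →ₗ[k] A →ₗ[k] A) (R p q : Ω → A →ₗ[k] A)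
    (l : Ω → Ω → A →ₗ[k] M →ₗ[k] M) (r : Ω → Ω → M →ₗ[k] A →ₗ[k] M)
    (T pM qM : Ω → M →ₗ[k] M)
    -- `A` is a Rota-Baxter family BiHom-`Ω`-associative algebra of weight `λ`
    (hA : IsRBFBiHomAssoc lam mul R p q)
    -- `pM`, `qM` are commuting families
    (hcomm : ∀ α β m, pM α (qM β m) = qM β (pM α m))
    -- `M` is a bimodule over the underlying BiHom-`Ω`-associative algebra
    (hM : IsBiHomBimodule mul p q l r pM qM)
    -- `T` commutes with the structure maps of `M`
    (hpT : ∀ ω m, pM ω (T ω m) = T ω (pM ω m))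
    (hqT : ∀ ω m, qM ω (T ω m) = T ω (qM ω m)) :
    IsRBFBiHomAssoc lam (semidirectMul mul l r)
        (fun ω => (R ω).prodMap (T ω))
        (fun ω => (p ω).prodMap (pM ω)) (fun ω => (q ω).prodMap (qM ω))
      ↔ (IsBiHomBimodule mul p q l r pM qM ∧
          (∀ ω m, pM ω (T ω m) = T ω (pM ω m)) ∧
          (∀ ω m, qM ω (T ω m) = T ω (qM ω m)) ∧
          (∀ α β a m,
            l α β (R α a) (T β m)
              = T (α * β) (l α β a (T β m) + l α β (R α a) m + lam • l α β a m)) ∧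
          (∀ α β m a,
            r α β (T α m) (R β a)
              = T (α * β) (r α β m (R β a) + r α β (T α m) a + lam • r α β m a))) := by
  
  obtain ⟨⟨hApq, hAp, hAq, hAassoc⟩, hpR, hqR, hRB⟩ := hA
  obtain ⟨hl1, hl2, hl3, hr1, hr2, hr3, hlr⟩ := hM
  constructor
  · rintro ⟨_, _, _, hRBs⟩
    refine ⟨⟨hl1, hl2, hl3, hr1, hr2, hr3, hlr⟩, hpT, hqT, ?_, ?_⟩
    · intro α β a m
      have := hRBs α β (a, 0) (0, m)
      simp [semidirectMul, Prod.ext_iff] at this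
      rw [this, map_add, map_add, map_smul]; abel
    · intro α β m a
      have := hRBs α β (0, m) (a, 0)
      simp [semidirectMul, Prod.ext_iff] at this
      rw [this, map_add, map_add, map_smul]; abel
  · rintro ⟨_, _, _, hT1, hT2⟩
    refine ⟨⟨?_, ?_, ?_, ?_⟩, ?_, ?_, ?_⟩
    · rintro α β ⟨x, m⟩
      simp [Prod.ext_iff, hApq, hcomm]
    · rintro α β ⟨x, m⟩ ⟨y, n⟩
      simp [semidirectMul, Prod.ext_iff, hAp, hl1, hr1]
    · rintro α β ⟨x, m⟩ ⟨y, n⟩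
      simp [semidirectMul, Prod.ext_iff, hAq, hl2, hr2]
    · rintro α β γ ⟨x, m⟩ ⟨y, n⟩ ⟨z, u⟩
      simp [semidirectMul, Prod.ext_iff, hAassoc, hl3, hr3, hlr]
      abel
    · rintro ω ⟨x, m⟩
      simp [Prod.ext_iff, hpR, hpT]
    · rintro ω ⟨x, m⟩
      simp [Prod.ext_iff, hqR, hqT]
    · rintro α β ⟨x, m⟩ ⟨y, n⟩
      simp [semidirectMul, Prod.ext_iff, hRB, hT1 α β x n, hT2 α β m y, smul_add]
      abel
end

section
/- Let 0 → M → E →^{ρ} A → 0 be an abelian extension of a Rota-Baxter family BiHom-Ω-associative algebra A of weight λ by trivial M, with section (s_α). Define ψ_{α,β}(a,b) := μ^E_{α,β}(s_α(a), s_β(b)) − s_{αβ}(μ_{α,β}(a,b)) and χ_ω(a) := T^E_ω(s_ω(a)) − s_ω(R_ω(a)); both take values in M. Then the pair (ψ_{α,β}, χ_ω) is a 2-cocycle in C²_{RBFA_λ}(A, M): δ²_Alg(ψ) = 0 and ∂¹(χ) + Φ²(ψ) = 0. -/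
/-- For an abelian extension `0 → M → E →^ρ A → 0` of a
Rota-Baxter family BiHom-`Ω`-associative algebra `A` of weight `λ` by a trivial one
`M` with section `s`, the pair `(ψ, χ)` defined by
`i(ψ_{α,β}(a,b)) = μ^E(s a, s b) − s(μ(a,b))` and `i(χ_ω(a)) = T^E(s a) − s(R a)`
is a 2-cocycle in `C²_{RBFA_λ}(A, M)`: `δ²_Alg(ψ) = 0` and `∂¹(χ) + Φ²(ψ) = 0`. -/
theorem abelianExtension_two_cocycle
    {k Ω A E M : Type*} [CommRing k] [Monoid Ω]
    [AddCommGroup A] [Module k A] [AddCommGroup E] [Module k E]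
    [AddCommGroup M] [Module k M]
    (lam : k)
    (mul : Ω → Ω → A →ₗ[k] A →ₗ[k] A) (R pA qA : Ω → A →ₗ[k] A)
    (mulE : Ω → Ω → E →ₗ[k] E →ₗ[k] E) (TE pE qE : Ω → E →ₗ[k] E)
    (T pM qM : Ω → M →ₗ[k] M)
    (i : Ω → M →ₗ[k] E) (ρ : Ω → E →ₗ[k] A) (s : Ω → A →ₗ[k] E)
    -- `A` is a Rota-Baxter family BiHom-`Ω`-associative algebra of weight `λ`
    (hApq : ∀ α β x, pA α (qA β x) = qA β (pA α x))
    (hApmul : ∀ α β x y, pA (α * β) (mul α β x y) = mul α β (pA α x) (pA β y))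
    (hAqmul : ∀ α β x y, qA (α * β) (mul α β x y) = mul α β (qA α x) (qA β y))
    (hAassoc : ∀ α β γ x y z,
      mul α (β * γ) (pA α x) (mul β γ y z) = mul (α * β) γ (mul α β x y) (qA γ z))
    (hApR : ∀ ω x, pA ω (R ω x) = R ω (pA ω x))
    (hAqR : ∀ ω x, qA ω (R ω x) = R ω (qA ω x))
    (hARB : ∀ α β x y,
      mul α β (R α x) (R β y)
        = R (α * β) (mul α β (R α x) y) + R (α * β) (mul α β x (R β y))
          + lam • R (α * β) (mul α β x y))
    -- `E` is a Rota-Baxter family BiHom-`Ω`-associative algebra of weight `λ`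
    (hEpq : ∀ α β x, pE α (qE β x) = qE β (pE α x))
    (hEpmul : ∀ α β x y, pE (α * β) (mulE α β x y) = mulE α β (pE α x) (pE β y))
    (hEqmul : ∀ α β x y, qE (α * β) (mulE α β x y) = mulE α β (qE α x) (qE β y))
    (hEassoc : ∀ α β γ x y z,
      mulE α (β * γ) (pE α x) (mulE β γ y z) = mulE (α * β) γ (mulE α β x y) (qE γ z))
    (hEpT : ∀ ω x, pE ω (TE ω x) = TE ω (pE ω x))
    (hEqT : ∀ ω x, qE ω (TE ω x) = TE ω (qE ω x))
    (hERB : ∀ α β x y,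
      mulE α β (TE α x) (TE β y)
        = TE (α * β) (mulE α β (TE α x) y) + TE (α * β) (mulE α β x (TE β y))
          + lam • TE (α * β) (mulE α β x y))
    -- `M` is a trivial Rota-Baxter family BiHom-`Ω`-associative algebra
    (hMpq : ∀ α β m, pM α (qM β m) = qM β (pM α m))
    (hMpT : ∀ ω m, pM ω (T ω m) = T ω (pM ω m))
    (hMqT : ∀ ω m, qM ω (T ω m) = T ω (qM ω m))
    -- short exactness
    (hinj : ∀ ω, Function.Injective (i ω))
    (hsurj : ∀ ω, Function.Surjective (ρ ω))
    (hexact : ∀ ω, LinearMap.range (i ω) = LinearMap.ker (ρ ω))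
    -- `i` and `ρ` are morphisms of Rota-Baxter family BiHom-`Ω`-associative algebras
    (hip : ∀ ω m, i ω (pM ω m) = pE ω (i ω m))
    (hiq : ∀ ω m, i ω (qM ω m) = qE ω (i ω m))
    (hiT : ∀ ω m, i ω (T ω m) = TE ω (i ω m))
    (himul : ∀ α β m m', mulE α β (i α m) (i β m') = 0)
    (hρp : ∀ ω x, ρ ω (pE ω x) = pA ω (ρ ω x))
    (hρq : ∀ ω x, ρ ω (qE ω x) = qA ω (ρ ω x))
    (hρT : ∀ ω x, ρ ω (TE ω x) = R ω (ρ ω x))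
    (hρmul : ∀ α β x y, ρ (α * β) (mulE α β x y) = mul α β (ρ α x) (ρ β y))
    -- `s` is a section
    (hsp : ∀ ω a, pE ω (s ω a) = s ω (pA ω a))
    (hsq : ∀ ω a, qE ω (s ω a) = s ω (qA ω a))
    (hρs : ∀ ω a, ρ ω (s ω a) = a)
    -- the induced actions, characterized through the injection `i`
    (l : Ω → Ω → A →ₗ[k] M →ₗ[k] M) (r : Ω → Ω → M →ₗ[k] A →ₗ[k] M)
    (hl : ∀ α β a m, i (α * β) (l α β a m) = mulE α β (s α a) (i β m))
    (hr : ∀ α β m a, i (α * β) (r α β m a) = mulE α β (i α m) (s β a))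
    -- the 2-cochain `(ψ, χ)`, characterized through the injection `i`
    (ψ : Ω → Ω → A →ₗ[k] A →ₗ[k] M) (χ : Ω → A →ₗ[k] M)
    (hψ : ∀ α β a b,
      i (α * β) (ψ α β a b) = mulE α β (s α a) (s β b) - s (α * β) (mul α β a b))
    (hχ : ∀ ω a, i ω (χ ω a) = TE ω (s ω a) - s ω (R ω a)) :
    -- `δ²_Alg(ψ) = 0`
    (∀ α β γ a b c,
      l α (β * γ) (pA α a) (ψ β γ b c) - ψ (α * β) γ (mul α β a b) (qA γ c)
        + ψ α (β * γ) (pA α a) (mul β γ b c)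
        - r (α * β) γ (ψ α β a b) (qA γ c) = 0) ∧
    -- `∂¹(χ) + Φ²(ψ) = 0`
    (∀ α β x y,
      (l α β (R α x) (χ β y) - T (α * β) (l α β x (χ β y))
        - χ (α * β) (mul α β x (R β y) + mul α β (R α x) y + lam • mul α β x y)
        + r α β (χ α x) (R β y) - T (α * β) (r α β (χ α x) y))
      + (ψ α β (R α x) (R β y)
        - T (α * β) (ψ α β (R α x) y + ψ α β x (R β y) + lam • ψ α β x y)) = 0) := by
  constructor
  · intro α β γ a b c
    apply hinj (α * β * γ)
    rw [map_zero]
    have e1 : i (α * β * γ) (l α (β * γ) (pA α a) (ψ β γ b c))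
        = mulE (α * β) γ (mulE α β (s α a) (s β b)) (s γ (qA γ c))
          - mulE α (β * γ) (pE α (s α a)) (s (β * γ) (mul β γ b c)) := by
      rw [mul_assoc, hl, hψ, map_sub, ← hsp, hEassoc, hsq]
    have e2 : i (α * β * γ) (ψ (α * β) γ (mul α β a b) (qA γ c))
        = mulE (α * β) γ (s (α * β) (mul α β a b)) (s γ (qA γ c))
          - s (α * β * γ) (mul (α * β) γ (mul α β a b) (qA γ c)) := hψ _ _ _ _
    have e3 : i (α * β * γ) (ψ α (β * γ) (pA α a) (mul β γ b c))
        = mulE α (β * γ) (pE α (s α a)) (s (β * γ) (mul β γ b c))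
          - s (α * β * γ) (mul (α * β) γ (mul α β a b) (qA γ c)) := by
      rw [mul_assoc, hψ, hAassoc, ← mul_assoc, ← hsp]
    have e4 : i (α * β * γ) (r (α * β) γ (ψ α β a b) (qA γ c))
        = mulE (α * β) γ (mulE α β (s α a) (s β b)) (s γ (qA γ c))
          - mulE (α * β) γ (s (α * β) (mul α β a b)) (s γ (qA γ c)) := by
      rw [hr, hψ, map_sub, LinearMap.sub_apply]
    simp only [map_sub, map_add, map_zero, e1, e2, e3, e4]
    abel
  · intro α β x y
    apply hinj (α * β)
    rw [map_zero]
    have hsR : ∀ ω a, s ω (R ω a) = TE ω (s ω a) - i ω (χ ω a) := by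
      intro ω a; rw [hχ]; abel
    simp only [map_add, map_sub, map_smul, hiT, hl, hr, hψ, hχ, smul_sub]
    rw [hARB]
    simp only [map_add, map_smul]
    rw [hsR α x, hsR β y]
    simp only [map_sub, map_add, map_smul, LinearMap.sub_apply, LinearMap.add_apply,
      LinearMap.smul_apply, himul, smul_sub]
    rw [hERB]
    abel
end
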